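/- arXiv:math/0409110 — 3 statements merged into one kernel-verified Lean document; each statement's English description precedes it below -/
import Mathlib

section
/- Let G be a group acting on a Polish space X that is σ-compact, second countable, and has no isolated points, via an action α: G × X → X such that every orbit is dense in X and α(g,·) is continuous for each fixed g ∈ G. Then for every meagre set M ⊆ X there is a closed nowhere dense set C ⊆ X and a countable set Y ⊆ G such that M ⊆ α(Y, C) = {α(y,c) : y ∈ Y, c ∈ C}. -/
/-!
By σ-compactness, `M` lies in a countable union of compact meagre sets `Kᵢ`. As orbits are
dense, finitely many translates of any nonempty open set cover `Kᵢ`; so `Kᵢ` is covered by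
finitely many translates of a closed meagre set `Cᵢ` inside an arbitrary neighbourhood of a
fixed point `z`. If these neighbourhoods shrink to `z`, the closure of `⋃ Cᵢ` adds at most `z`,
which is meagre as it is not isolated, and a closed meagre set in a Baire space is nowhere dense.
-/

open Set Filter Topology MulAction Pointwise

section Topology

variable {X : Type*} [TopologicalSpace X]

theorem IsMeagre.exists_countable_isCompact_cover [SigmaCompactSpace X] {M : Set X}
    (hM : IsMeagre M) :
    ∃ 𝒦 : Set (Set X),
      𝒦.Countable ∧ (∀ K ∈ 𝒦, IsCompact K ∧ IsMeagre K) ∧ M ⊆ ⋃₀ 𝒦 := by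
  obtain ⟨S, hSnwd, hScount, hMS⟩ := isMeagre_iff_countable_union_isNowhereDense.mp hM
  refine ⟨image2 (fun s n ↦ closure s ∩ compactCovering X n) S univ,
    hScount.image2 countable_univ _, ?_, ?_⟩
  · rintro _ ⟨s, hs, n, -, rfl⟩
    exact ⟨(isCompact_compactCovering X n).inter_left isClosed_closure,
      (hSnwd s hs).closure.isMeagre.inter⟩
  · intro x hx
    obtain ⟨s, hs, hxs⟩ := hMS hx
    obtain ⟨n, hxn⟩ := exists_mem_compactCovering x
    exact ⟨_, mem_image2_of_mem hs (mem_univ n), subset_closure hxs, hxn⟩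

theorem IsMeagre.isNowhereDense_of_isClosed [BaireSpace X] {s : Set X} (hs : IsMeagre s)
    (hc : IsClosed s) : IsNowhereDense s := by
  rw [hc.isNowhereDense_iff, ← not_nonempty_iff_eq_empty]
  exact fun hne ↦ not_isMeagre_of_isOpen isOpen_interior hne (hs.mono interior_subset)

theorem isNowhereDense_singleton_of_not_isOpen [T1Space X] {z : X} (hz : ¬IsOpen {z}) :
    IsNowhereDense {z} := by
  have : (𝓝[≠] z).NeBot :=
    neBot_iff.mpr fun h ↦ hz ((isOpen_singleton_iff_punctured_nhds z).mpr h)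
  rw [isClosed_singleton.isNowhereDense_iff, interior_singleton]

theorem exists_isClosed_nhds_tendsto_cofinite_smallSets [RegularSpace X]
    [FirstCountableTopology X] (ι : Type*) [Countable ι] (z : X) :
    ∃ u : ι → Set X,
      (∀ i, u i ∈ 𝓝 z ∧ IsClosed (u i)) ∧ Tendsto u cofinite (𝓝 z).smallSets := by
  obtain ⟨v, hv, hbasis⟩ := (closed_nhds_basis z).exists_antitone_subbasis
  obtain ⟨e, he⟩ := Countable.exists_injective_nat ι
  refine ⟨v ∘ e, fun i ↦ hv (e i), hbasis.tendsto_smallSets.comp ?_⟩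
  rw [← Nat.cofinite_eq_atTop]
  exact he.tendsto_cofinite

/-- Away from `z` the family is locally finite, so the closure of its union adds only `z`. -/
theorem closure_iUnion_subset_insert_of_tendsto_smallSets [T2Space X] {ι : Type*}
    {C : ι → Set X} {z : X} (hC : ∀ i, IsClosed (C i))
    (hz : Tendsto C cofinite (𝓝 z).smallSets) :
    closure (⋃ i, C i) ⊆ insert z (⋃ i, C i) := by
  intro x hx
  rcases eq_or_ne x z with rfl | hxz
  · exact mem_insert x _
  obtain ⟨W, hW, V, hV, hWV⟩ := Filter.disjoint_iff.mp (disjoint_nhds_nhds.mpr hxz)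
  have hfin : {i | ¬C i ⊆ V}.Finite := tendsto_smallSets_iff.mp hz V hV
  have hsplit : ⋃ i, C i ⊆ (⋃ i ∈ {i | ¬C i ⊆ V}, C i) ∪ V := by
    refine iUnion_subset fun i ↦ ?_
    by_cases hi : C i ⊆ V
    · exact hi.trans subset_union_right
    · exact (subset_biUnion_of_mem (u := C) hi).trans subset_union_left
  have hx' := closure_mono hsplit hx
  rw [closure_union, (hfin.isClosed_biUnion fun i _ ↦ hC i).closure_eq] at hx'
  rcases hx' with hx' | hx'
  · obtain ⟨i, -, hxi⟩ := mem_iUnion₂.mp hx'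
    exact mem_insert_of_mem z (mem_iUnion_of_mem i hxi)
  · obtain ⟨y, hyW, hyV⟩ := mem_closure_iff_nhds.mp hx' W hW
    exact (disjoint_left.mp hWV hyW hyV).elim

theorem isNowhereDense_closure_iUnion_of_tendsto_smallSets [T2Space X] [BaireSpace X]
    {ι : Type*} [Countable ι] {C : ι → Set X} {z : X} (hz : ¬IsOpen {z})
    (hC : ∀ i, IsClosed (C i)) (hCm : ∀ i, IsMeagre (C i))
    (hCz : Tendsto C cofinite (𝓝 z).smallSets) :
    IsNowhereDense (closure (⋃ i, C i)) := by
  have hmeagre : IsMeagre (insert z (⋃ i, C i)) := by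
    rw [insert_eq]
    exact (isNowhereDense_singleton_of_not_isOpen hz).isMeagre.union (isMeagre_iUnion hCm)
  exact (hmeagre.mono (closure_iUnion_subset_insert_of_tendsto_smallSets hC hCz))
    |>.isNowhereDense_of_isClosed isClosed_closure

end Topology

theorem IsCompact.exists_isClosed_isMeagre_subset_smul_cover {G X : Type*} [Group G]
    [TopologicalSpace X] [T2Space X] [MulAction G X] [ContinuousConstSMul G X] [IsMinimal G X]
    {K W : Set X} (hK : IsCompact K) (hKm : IsMeagre K) (hW : IsClosed W)
    (hWi : (interior W).Nonempty) :
    ∃ C ⊆ W, IsClosed C ∧ IsMeagre C ∧ ∃ F : Finset G, K ⊆ ⋃ g ∈ F, g • C := by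
  obtain ⟨F, hF⟩ := hK.exists_finite_cover_smul G isOpen_interior hWi
  refine ⟨W ∩ ⋃ g ∈ F, g⁻¹ • K, inter_subset_left, ?_, ?_, F, ?_⟩
  · exact hW.inter (F.finite_toSet.isClosed_biUnion fun g _ ↦ (hK.smul g⁻¹).isClosed)
  · exact (isMeagre_biUnion F.countable_toSet fun g _ ↦
      (Homeomorph.smul g⁻¹).isInducing.isMeagre_image hKm).inter.mono (inter_comm _ _).subset
  · intro x hx
    obtain ⟨g, hg, y, hy, rfl⟩ := mem_iUnion₂.mp (hF hx)
    refine mem_biUnion hg (smul_mem_smul_set ⟨interior_subset hy, mem_biUnion hg ?_⟩)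
    rwa [mem_inv_smul_set_iff]

theorem covering_meagre_by_translates_of_closed_nwd_general
    {G X : Type*} [Group G] [TopologicalSpace X] [PolishSpace X]
    [SigmaCompactSpace X]
    (hni : ∀ x : X, ¬ IsOpen ({x} : Set X))
    (α : G → X → X)
    (hone : ∀ x, α 1 x = x)
    (hmul : ∀ g h x, α (g * h) x = α g (α h x))
    (hcont : ∀ g, Continuous (α g))
    (horb : ∀ x : X, Dense (Set.range fun g => α g x))
    (M : Set X) (hM : IsMeagre M) :
    ∃ (C : Set X) (Y : Set G), IsClosed C ∧ IsNowhereDense C ∧ Y.Countable ∧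
      M ⊆ ⋃ y ∈ Y, α y '' C := by
  -- with this instance `g • s` unfolds to `α g '' s`, which closes the final goal
  let _ : MulAction G X := { smul := α, one_smul := hone, mul_smul := hmul }
  have : ContinuousConstSMul G X := ⟨hcont⟩
  have : IsMinimal G X := ⟨horb⟩
  rcases isEmpty_or_nonempty X with hX | ⟨⟨z⟩⟩
  · exact ⟨∅, ∅, isClosed_empty, isNowhereDense_empty, countable_empty,
      by simp [eq_empty_of_isEmpty M]⟩
  obtain ⟨𝒦, h𝒦count, h𝒦, hM𝒦⟩ := hM.exists_countable_isCompact_cover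
  have := h𝒦count.to_subtype
  obtain ⟨u, hu, hu_tendsto⟩ := exists_isClosed_nhds_tendsto_cofinite_smallSets 𝒦 z
  choose C hCu hCc hCm F hF using fun K : 𝒦 ↦
    (h𝒦 K K.2).1.exists_isClosed_isMeagre_subset_smul_cover (G := G) (h𝒦 K K.2).2 (hu K).2
      ⟨z, mem_interior_iff_mem_nhds.mpr (hu K).1⟩
  refine ⟨closure (⋃ K, C K), ⋃ K, (F K : Set G), isClosed_closure,
    isNowhereDense_closure_iUnion_of_tendsto_smallSets (hni z) hCc hCm
      (hu_tendsto.smallSets_mono (Eventually.of_forall hCu)),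
    countable_iUnion fun K ↦ (F K).countable_toSet, ?_⟩
  intro x hx
  obtain ⟨K, hK, hxK⟩ := hM𝒦 hx
  obtain ⟨g, hg, hxg⟩ := mem_iUnion₂.mp (hF ⟨K, hK⟩ hxK)
  have hxC : x ∈ g • closure (⋃ K, C K) :=
    smul_set_mono ((subset_iUnion C ⟨K, hK⟩).trans subset_closure) hxg
  exact mem_biUnion (mem_iUnion_of_mem _ hg) hxC

/-- If a group `G` acts on a σ-compact, second countable Polish space `X`
without isolated points, with all orbits dense and each `α g` continuous, then every
meagre set `M ⊆ X` is covered by countably many translates of a single closed nowhere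
dense set. -/
theorem covering_meagre_by_translates_of_closed_nwd
    {G X : Type*} [Group G] [TopologicalSpace X] [PolishSpace X]
    [SigmaCompactSpace X] [SecondCountableTopology X]
    (hni : ∀ x : X, ¬ IsOpen ({x} : Set X))
    (α : G → X → X)
    (hone : ∀ x, α 1 x = x)
    (hmul : ∀ g h x, α (g * h) x = α g (α h x))
    (hcont : ∀ g, Continuous (α g))
    (horb : ∀ x : X, Dense (Set.range fun g => α g x))
    (M : Set X) (hM : IsMeagre M) :
    ∃ (C : Set X) (Y : Set G), IsClosed C ∧ IsNowhereDense C ∧ Y.Countable ∧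
      M ⊆ ⋃ y ∈ Y, α y '' C :=
  covering_meagre_by_translates_of_closed_nwd_general hni α hone hmul hcont horb M hM
end

section
/- If G is a non-compact Polish group, then there exist a neighbourhood U of the identity and a sequence (x_n) in G such that either the translates x_n·U are pairwise disjoint or the translates x_n⁻¹·U are pairwise disjoint. -/
/-!
Suppose no neighbourhood of `1` has infinitely many pairwise disjoint left translates. Then a
maximal disjoint family of translates `f • V` is finite, so `G` is covered by finitely many
translates of `V * V⁻¹`: `G` is precompact, on both sides. Precompactness makes conjugation
equicontinuous at `1` (small invariant neighbourhoods), so the right uniformity is a group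
uniformity in which `G` is totally bounded, and the completion `Ĝ` is a compact group. Being
Polish, `G` is a dense `Gδ` subgroup of `Ĝ`; by Baire every coset `y • G` meets `G`, so
`G = Ĝ` is compact.
-/

open Set Topology Pointwise Filter Uniformity

theorem Topology.IsDenseInducing.isGδ_range {X Y : Type*} [TopologicalSpace X]
    [TopologicalSpace.IsCompletelyPseudoMetrizableSpace X] [TopologicalSpace Y] [T2Space Y]
    {i : X → Y} (hi : IsDenseInducing i) : IsGδ (range i) := by
  let _ := TopologicalSpace.upgradeIsCompletelyPseudoMetrizable X
  -- By density and completeness, `y` lies in the range iff `comap i (𝓝 y)` is Cauchy.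
  have hrange : range i = ⋂ k : ℕ, ⋃₀ {U : Set Y |
      IsOpen U ∧ ∀ a ∈ i ⁻¹' U, ∀ b ∈ i ⁻¹' U, dist a b ≤ 1 / (k + 1)} := by
    refine Subset.antisymm ?_ fun y hy => ?_
    · rintro _ ⟨g, rfl⟩
      refine mem_iInter.2 fun k => ?_
      have hball : Metric.ball g (1 / (k + 1) / 2) ∈ 𝓝 g := Metric.ball_mem_nhds _ (by positivity)
      obtain ⟨W, hW, hWball⟩ := (hi.isInducing.nhds_eq_comap g ▸ hball :)
      obtain ⟨U, hUW, hUo, hgU⟩ := mem_nhds_iff.1 hW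
      refine ⟨U, ⟨hUo, fun a ha b hb => ?_⟩, hgU⟩
      have ha' := Metric.mem_ball.1 (hWball (hUW ha))
      have hb' := Metric.mem_ball.1 (hWball (hUW hb))
      linarith [dist_triangle_right a b g, add_halves (1 / ((k : ℝ) + 1))]
    · have hne : (comap i (𝓝 y)).NeBot := hi.comap_nhds_neBot y
      have hcauchy : Cauchy (comap i (𝓝 y)) := by
        refine Metric.cauchy_iff.2 ⟨hne, fun ε hε => ?_⟩
        obtain ⟨k, hk⟩ := exists_nat_one_div_lt hε
        obtain ⟨U, ⟨hUo, hUdist⟩, hyU⟩ := mem_iInter.1 hy k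
        exact ⟨i ⁻¹' U, preimage_mem_comap (hUo.mem_nhds hyU),
          fun a ha b hb => (hUdist a ha b hb).trans_lt hk⟩
      obtain ⟨g, hg⟩ := CompleteSpace.complete hcauchy
      exact ⟨g, tendsto_nhds_unique ((map_mono hg).trans (hi.continuous.tendsto g)) map_comap_le⟩
  rw [hrange]
  exact .iInter_of_isOpen fun k => isOpen_sUnion fun U hU => hU.1

@[to_additive]
theorem Subgroup.eq_top_of_isGδ_of_dense {G : Type*} [Group G] [TopologicalSpace G]
    [ContinuousMul G] [BaireSpace G] {H : Subgroup G} (hδ : IsGδ (H : Set G))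
    (hd : Dense (H : Set G)) : H = ⊤ := by
  refine eq_top_iff' H |>.2 fun y => ?_
  have hδ' : IsGδ ((y⁻¹ * ·) ⁻¹' (H : Set G)) := hδ.preimage (continuous_const_mul _)
  have hd' : Dense ((y⁻¹ * ·) ⁻¹' (H : Set G)) := hd.preimage (Homeomorph.mulLeft y⁻¹).isOpenMap
  obtain ⟨z, hzH, hyz⟩ := (hd.inter_of_Gδ hδ hδ' hd').nonempty
  simpa using H.mul_mem hzH (H.inv_mem hyz)

theorem UniformSpace.Completion.compactSpace_of_totallyBounded {α : Type*} [UniformSpace α]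
    (h : TotallyBounded (univ : Set α)) : CompactSpace (Completion α) := by
  have himage : TotallyBounded (range ((↑) : α → Completion α)) := by
    simpa only [image_univ] using h.image (uniformContinuous_coe α)
  refine ⟨?_⟩
  rw [← denseRange_coe.closure_range]
  exact himage.closure.isCompact_of_isClosed isClosed_closure

open UniformSpace in
theorem IsUniformAddGroup.completeSpace {G : Type*} [AddGroup G] [UniformSpace G]
    [IsUniformAddGroup G] [TopologicalSpace.IsCompletelyPseudoMetrizableSpace G]
    [BaireSpace (Completion G)] : CompleteSpace G := by
  have hrange : (Completion.toCompl : G →+ Completion G).range = ⊤ :=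
    AddSubgroup.eq_top_of_isGδ_of_dense (Completion.isDenseInducing_toCompl G).isGδ_range
      (Completion.isDenseInducing_toCompl G).dense
  rw [completeSpace_iff_isComplete_range (Completion.isUniformInducing_coe G)]
  change IsComplete ((Completion.toCompl : G →+ Completion G).range : Set (Completion G))
  rw [hrange]
  exact isComplete_univ

theorem exists_finset_univ_subset_mul_mul_inv {G : Type*} [Group G] {V : Set G}
    (h : ∀ x : ℕ → G, ¬ Pairwise fun m n => Disjoint (x m • V) (x n • V)) :
    ∃ F : Finset G, univ ⊆ (F : Set G) * (V * V⁻¹) := by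
  by_contra! hF
  have : Std.Symm fun a b : G => Disjoint (a • V) (b • V) := ⟨fun _ _ hab => hab.symm⟩
  obtain ⟨x, -, hx⟩ := exists_seq_of_forall_finset_exists' (fun _ => True)
    (fun a b : G => Disjoint (a • V) (b • V)) fun F _ => by
      obtain ⟨y, hy⟩ := not_subset.1 (hF F)
      refine ⟨y, trivial, fun f hf => Set.disjoint_left.2 ?_⟩
      rintro _ ⟨v, hv, rfl⟩ ⟨w, hw, hwv⟩
      refine hy.2 ⟨f, hf, v * w⁻¹, mul_mem_mul hv (inv_mem_inv.2 hw), ?_⟩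
      change y * w = f * v at hwv
      change f * (v * w⁻¹) = y
      rw [← mul_assoc, ← hwv, mul_inv_cancel_right]
  exact h x hx

theorem totallyBounded_univ_of_forall_univ_subset_mul {G : Type*} [Group G] [UniformSpace G]
    [IsUniformGroup G]
    (h : ∀ W ∈ 𝓝 (1 : G), ∃ F : Finset G, univ ⊆ (F : Set G) * W) :
    TotallyBounded (univ : Set G) :=
  totallyBounded_iff_subset_finite_iUnion_nhds_one.2 fun W hW =>
    let ⟨F, hF⟩ := h W hW
    ⟨F, F.finite_toSet, by rwa [iUnion_smul_left_image, smul_eq_mul]⟩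

section TopologicalGroup

variable {G : Type*} [Group G] [TopologicalSpace G] [IsTopologicalGroup G]

theorem exists_finset_univ_subset_mul_of_forall_not_pairwise_disjoint_smul
    (h : ∀ U ∈ 𝓝 (1 : G), ∀ x : ℕ → G, ¬ Pairwise fun m n => Disjoint (x m • U) (x n • U))
    {W : Set G} (hW : W ∈ 𝓝 1) : ∃ F : Finset G, univ ⊆ (F : Set G) * W := by
  obtain ⟨V, hV, -, hVinv, hVW⟩ := exists_closed_nhds_one_inv_eq_mul_subset hW
  obtain ⟨F, hF⟩ := exists_finset_univ_subset_mul_mul_inv (h V hV)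
  rw [hVinv] at hF
  exact ⟨F, hF.trans (mul_subset_mul_left hVW)⟩

theorem exists_finset_univ_subset_mul_of_forall_not_pairwise_disjoint_smul'
    (h : ∀ U ∈ 𝓝 (1 : G), ∀ x : ℕ → G, ¬ Pairwise fun m n => Disjoint (x m • U) (x n • U))
    {W : Set G} (hW : W ∈ 𝓝 1) : ∃ F : Finset G, univ ⊆ W * (F : Set G) := by
  classical
  obtain ⟨F, hF⟩ := exists_finset_univ_subset_mul_of_forall_not_pairwise_disjoint_smul h
    (inv_mem_nhds_one G hW)
  refine ⟨F⁻¹, fun g _ => ?_⟩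
  simpa [Finset.coe_inv, mul_inv_rev] using Set.inv_mem_inv.2 (hF (mem_univ g⁻¹))

theorem tendsto_conj_nhds_one_of_forall_univ_subset_mul
    (h : ∀ W ∈ 𝓝 (1 : G), ∃ F : Finset G, univ ⊆ W * (F : Set G)) :
    Tendsto (fun gx : G × G ↦ gx.1 * gx.2 * gx.1⁻¹) (comap Prod.snd (𝓝 1)) (𝓝 1) := by
  intro U hU
  obtain ⟨V, hV, -, -, hVU⟩ := exists_closed_nhds_one_inv_eq_mul_subset hU
  obtain ⟨C, hC, -, hCinv, hCV⟩ := exists_closed_nhds_one_inv_eq_mul_subset hV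
  have hCsubV : C ⊆ V := fun c hc => hCV ⟨c, hc, 1, mem_of_mem_nhds hC, mul_one c⟩
  obtain ⟨F, hF⟩ := h C hC
  have hconj : ∀ f : G, (fun a => f * a * f⁻¹) ⁻¹' C ∈ 𝓝 1 := fun f =>
    (IsTopologicalGroup.continuous_conj f).continuousAt.preimage_mem_nhds (by simpa using hC)
  refine mem_comap.2 ⟨_, (Filter.biInter_finset_mem F).2 fun f _ => hconj f, ?_⟩
  rintro ⟨g, a⟩ ha
  simp only [mem_preimage, mem_iInter] at ha ⊢
  obtain ⟨c, hc, f, hf, rfl⟩ := hF (mem_univ g)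
  have : c * f * a * (c * f)⁻¹ = c * (f * a * f⁻¹) * c⁻¹ := by group
  rw [this]
  exact hVU (mul_mem_mul (hCV (mul_mem_mul hc (ha f hf))) (hCsubV (hCinv ▸ inv_mem_inv.2 hc)))

theorem isUniformGroup_rightUniformSpace_of_tendsto_conj
    (h : Tendsto (fun gx : G × G ↦ gx.1 * gx.2 * gx.1⁻¹) (comap Prod.snd (𝓝 1)) (𝓝 1)) :
    @IsUniformGroup G (IsTopologicalGroup.rightUniformSpace G) _ := by
  let _ := IsTopologicalGroup.rightUniformSpace G
  have hright : Tendsto (fun q : (G × G) × (G × G) => q.2.1 * q.1.1⁻¹) (𝓤 (G × G)) (𝓝 1) :=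
    tendsto_comap.comp (uniformContinuous_fst : Tendsto _ (𝓤 (G × G)) (𝓤 G))
  have hleft : Tendsto (fun q : (G × G) × (G × G) => q.2.2 * q.1.2⁻¹) (𝓤 (G × G)) (𝓝 1) :=
    tendsto_comap.comp (uniformContinuous_snd : Tendsto _ (𝓤 (G × G)) (𝓤 G))
  set c := fun q : (G × G) × (G × G) => q.2.1 * q.2.2⁻¹
  have hpair :
      Tendsto (fun q => (c q, (q.2.2 * q.1.2⁻¹)⁻¹)) (𝓤 (G × G)) (comap Prod.snd (𝓝 1)) :=
    tendsto_comap_iff.2 (by simpa only [Function.comp_def, inv_one] using hleft.inv)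
  have hlim := (h.comp hpair).mul hright
  rw [mul_one] at hlim
  refine ⟨tendsto_comap_iff.2 (hlim.congr fun q => ?_)⟩
  simp only [Function.comp_apply, c, div_eq_mul_inv]
  group

theorem compactSpace_of_forall_not_pairwise_disjoint_smul
    [TopologicalSpace.IsCompletelyPseudoMetrizableSpace G]
    (h : ∀ U ∈ 𝓝 (1 : G), ∀ x : ℕ → G, ¬ Pairwise fun m n => Disjoint (x m • U) (x n • U)) :
    CompactSpace G := by
  let _ := IsTopologicalGroup.rightUniformSpace G
  have : IsUniformGroup G := isUniformGroup_rightUniformSpace_of_tendsto_conj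
    (tendsto_conj_nhds_one_of_forall_univ_subset_mul fun _ hW =>
      exists_finset_univ_subset_mul_of_forall_not_pairwise_disjoint_smul' h hW)
  have htb : TotallyBounded (univ : Set G) := totallyBounded_univ_of_forall_univ_subset_mul
    fun _ hW => exists_finset_univ_subset_mul_of_forall_not_pairwise_disjoint_smul h hW
  -- Mathlib's completion is a group only for additive groups.
  replace htb : TotallyBounded (univ : Set (Additive G)) := htb
  have : IsUniformAddGroup (Additive G) := ⟨uniformContinuous_div (α := G)⟩
  have : TopologicalSpace.IsCompletelyPseudoMetrizableSpace (Additive G) :=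
    inferInstanceAs (TopologicalSpace.IsCompletelyPseudoMetrizableSpace G)
  have : CompactSpace (UniformSpace.Completion (Additive G)) :=
    UniformSpace.Completion.compactSpace_of_totallyBounded htb
  have : CompleteSpace (Additive G) := IsUniformAddGroup.completeSpace
  exact ⟨htb.isCompact_of_isComplete isComplete_univ⟩

end TopologicalGroup

/-- in a non-compact Polish group there are a neighbourhood `U` of the
identity and a sequence `(x n)` such that either the translates `x n • U` are pairwise
disjoint or the translates `(x n)⁻¹ • U` are pairwise disjoint. -/
theorem noncompact_polish_group_disjoint_translates
    {G : Type*} [Group G] [TopologicalSpace G] [IsTopologicalGroup G] [PolishSpace G]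
    (hnc : ¬ CompactSpace G) :
    ∃ U ∈ nhds (1 : G), ∃ x : ℕ → G,
      (Pairwise fun m n => Disjoint (x m • U) (x n • U)) ∨
      (Pairwise fun m n => Disjoint ((x m)⁻¹ • U) ((x n)⁻¹ • U)) := by
  by_contra hcon
  exact hnc (compactSpace_of_forall_not_pairwise_disjoint_smul
    fun U hU x hx => hcon ⟨U, hU, x, .inl hx⟩)
end

section
/- Let G be a non-discrete Polish group. Then cov_G = cov*_G, where cov_G is the least cardinality of a set Q ⊆ G such that Q·C = G for some closed nowhere dense C ⊆ G, and cov*_G is the least cardinality of a set Q ⊆ G such that Q·M = G for some meagre M ⊆ G. -/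
open Set Topology Cardinal Pointwise

/-- `cov_G`: the least cardinality of a set `Q ⊆ G` such that `Q·C = G` for some closed
nowhere dense `C ⊆ G`. -/
noncomputable def covGroup (G : Type*) [Group G] [TopologicalSpace G] : Cardinal :=
  sInf {κ | ∃ Q C : Set G, κ = #Q ∧ IsClosed C ∧ IsNowhereDense C ∧ Q * C = Set.univ}

/-- `cov*_G`: the least cardinality of a set `Q ⊆ G` such that `Q·M = G` for some
meagre `M ⊆ G`. -/
noncomputable def covGroupStar (G : Type*) [Group G] [TopologicalSpace G] : Cardinal :=
  sInf {κ | ∃ Q M : Set G, κ = #Q ∧ IsMeagre M ∧ Q * M = Set.univ}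

/-!
Closed nowhere dense sets are meagre, so `cov*_G ≤ cov_G`. Conversely, let `Q·M = G` with `M`
meagre. By Baire's theorem `Q` is uncountable, so it suffices to find a countable `E` and a closed
nowhere dense `C` with `M ⊆ E·C`: then `(Q·E)·C = G` and `|Q·E| = |Q|`.

Cover `M` by closed nowhere dense sets `F n`. The set `C` is the complement of a dense open union
of holes, built along a countable base together with translated pieces of the `F n` that avoid
every hole. If finitely many translates of each neighbourhood of `1` cover `G`, the holes are kept
away from a neighbourhood `V` of `1` and each `F n` is cut into finitely many translates of pieces
of `closure V`. Otherwise some neighbourhood `W` of `1` has infinitely many pairwise disjoint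
translates; the holes lie in finitely many of them at every stage, and each piece `F n ∩ d k • W`
(`d` dense) is moved to a fresh one.
-/

section NowhereDense

variable {X : Type*} [TopologicalSpace X]

theorem IsNowhereDense.union {s t : Set X} (hs : IsNowhereDense s) (ht : IsNowhereDense t) :
    IsNowhereDense (s ∪ t) := by
  rw [IsNowhereDense, closure_union, interior_eq_empty_iff_dense_compl, compl_union]
  rw [IsNowhereDense, interior_eq_empty_iff_dense_compl] at hs ht
  exact hs.inter_of_isOpen_left ht isClosed_closure.isOpen_compl

theorem Set.Finite.isNowhereDense_biUnion {ι : Type*} {I : Set ι} (hI : I.Finite)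
    {f : ι → Set X} (h : ∀ i ∈ I, IsNowhereDense (f i)) : IsNowhereDense (⋃ i ∈ I, f i) := by
  induction I, hI using Set.Finite.induction_on with
  | empty => simp
  | insert _ _ ih =>
    rw [biUnion_insert]
    exact (h _ (mem_insert _ _)).union (ih fun i hi => h i (mem_insert_of_mem _ hi))

theorem IsNowhereDense.smul {G : Type*} [Group G] [MulAction G X] [ContinuousConstSMul G X]
    {s : Set X} (hs : IsNowhereDense s) (g : G) : IsNowhereDense (g • s) := by
  rw [IsNowhereDense, closure_smul, interior_smul, hs, smul_set_empty]

theorem IsMeagre.exists_seq_isClosed_isNowhereDense {s : Set X} (hs : IsMeagre s) :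
    ∃ F : ℕ → Set X, (∀ n, IsClosed (F n) ∧ IsNowhereDense (F n)) ∧ s ⊆ ⋃ n, F n := by
  obtain ⟨S, hSn, hSc, hsS⟩ := isMeagre_iff_countable_union_isNowhereDense.mp hs
  obtain ⟨f, hf⟩ := (hSc.insert ∅).exists_eq_range (insert_nonempty _ _)
  refine ⟨fun n => closure (f n), fun n => ⟨isClosed_closure, ?_⟩, ?_⟩
  · rcases (hf ▸ mem_range_self n : f n ∈ insert ∅ S) with h | h
    · simp [h]
    · exact (hSn _ h).closure
  · refine hsS.trans (sUnion_subset fun t ht => ?_)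
    obtain ⟨n, rfl⟩ : t ∈ range f := hf ▸ mem_insert_of_mem _ ht
    exact subset_iUnion_of_subset n subset_closure

theorem exists_isOpen_nonempty_subset_notMem_closure [T1Space X] [RegularSpace X] {x : X}
    (hx : ¬IsOpen {x}) {O : Set X} (hO : IsOpen O) (hne : O.Nonempty) :
    ∃ N ⊆ O, IsOpen N ∧ N.Nonempty ∧ x ∉ closure N := by
  obtain ⟨v, hvO, hvx⟩ : (O \ {x}).Nonempty := by
    refine sdiff_nonempty.mpr fun hOx => hx ?_
    rwa [← (subset_singleton_iff_eq.mp hOx).resolve_left hne.ne_empty]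
  obtain ⟨T, hTv, hTc, hTO⟩ :=
    exists_mem_nhds_isClosed_subset ((hO.sdiff isClosed_singleton).mem_nhds ⟨hvO, hvx⟩)
  exact ⟨interior T, interior_subset.trans (hTO.trans sdiff_subset), isOpen_interior,
    ⟨v, mem_interior_iff_mem_nhds.mpr hTv⟩,
    fun h => (hTO (closure_minimal interior_subset hTc h)).2 rfl⟩

open TopologicalSpace in
theorem exists_seq_isOpen_nonempty_forall_subset (X : Type*) [TopologicalSpace X]
    [SecondCountableTopology X] [Nonempty X] :
    ∃ b : ℕ → Set X, (∀ n, IsOpen (b n) ∧ (b n).Nonempty) ∧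
      ∀ O, IsOpen O → O.Nonempty → ∃ n, b n ⊆ O := by
  have hB := isBasis_countableBasis X
  obtain ⟨b, hb⟩ := (countable_countableBasis X).exists_eq_range <| by
    obtain ⟨x⟩ := ‹Nonempty X›
    obtain ⟨B, hB, -, -⟩ := hB.exists_subset_of_mem_open (mem_univ x) isOpen_univ
    exact ⟨B, hB⟩
  refine ⟨b, fun n => ?_, fun O hO ⟨x, hx⟩ => ?_⟩
  · have hn : b n ∈ countableBasis X := hb ▸ mem_range_self n
    exact ⟨hB.isOpen hn, nonempty_iff_ne_empty.mpr fun h => empty_notMem_countableBasis X (h ▸ hn)⟩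
  · obtain ⟨B, hB, -, hBO⟩ := hB.exists_subset_of_mem_open hx hO
    obtain ⟨n, rfl⟩ : B ∈ range b := hb ▸ hB
    exact ⟨n, hBO⟩


/- The holes `N t` and the pieces `K t` are chosen alternately: each hole misses the earlier
pieces and each piece misses the holes chosen so far. `A` is the class of admissible unions of
holes. -/
theorem exists_seq_isOpen_subset_forall_disjoint {b : ℕ → Set X}
    (hb : ∀ t, IsOpen (b t) ∧ (b t).Nonempty) (A : Set (Set X)) (hA_empty : ∅ ∈ A)
    (hA_union : ∀ U ∈ A, ∀ V ∈ A, U ∪ V ∈ A)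
    (hA_hole : ∀ O, IsOpen O → O.Nonempty → ∃ N ⊆ O, IsOpen N ∧ N.Nonempty ∧ N ∈ A)
    (R : ℕ → Set X → Prop)
    (hR : ∀ n, ∀ U ∈ A, ∃ K, IsClosed K ∧ IsNowhereDense K ∧ Disjoint K U ∧ R n K) :
    ∃ N K : ℕ → Set X, (∀ t, IsOpen (N t) ∧ (N t).Nonempty ∧ N t ⊆ b t) ∧ (∀ t, R t (K t)) ∧
      ∀ s t, Disjoint (K s) (N t) := by
  have step : ∀ t, ∀ U ∈ A, ∀ L, IsClosed L → IsNowhereDense L →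
      ∃ N K, (IsOpen N ∧ N.Nonempty ∧ N ⊆ b t \ L ∧ N ∈ A) ∧
        (IsClosed K ∧ IsNowhereDense K ∧ Disjoint K (U ∪ N) ∧ R t K) := by
    intro t U hU L hLc hLn
    have hbL : (b t \ L).Nonempty :=
      (isClosed_isNowhereDense_iff_compl.mp ⟨hLc, hLn⟩).2.inter_open_nonempty _ (hb t).1 (hb t).2
        |>.mono fun x hx => ⟨hx.1, hx.2⟩
    obtain ⟨N, hNsub, hNo, hNne, hNA⟩ := hA_hole _ ((hb t).1.sdiff hLc) hbL
    obtain ⟨K, hK⟩ := hR t (U ∪ N) (hA_union U hU N hNA)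
    exact ⟨N, K, ⟨hNo, hNne, hNsub, hNA⟩, hK⟩
  choose! N K hN hK using step
  let p : ℕ → Set X × Set X := fun t =>
    Nat.rec (∅, ∅) (fun t q => (q.1 ∪ N t q.1 q.2, q.2 ∪ K t q.1 q.2)) t
  have hp : ∀ t, (p t).1 ∈ A ∧ IsClosed (p t).2 ∧ IsNowhereDense (p t).2 := by
    intro t
    induction t with
    | zero => exact ⟨hA_empty, isClosed_empty, isNowhereDense_empty⟩
    | succ t ih =>
      obtain ⟨hKc, hKn, -⟩ := hK t _ ih.1 _ ih.2.1 ih.2.2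
      exact ⟨hA_union _ ih.1 _ (hN t _ ih.1 _ ih.2.1 ih.2.2).2.2.2, ih.2.1.union hKc,
        ih.2.2.union hKn⟩
  have hhole t := hN t _ (hp t).1 _ (hp t).2.1 (hp t).2.2
  have hpiece t := hK t _ (hp t).1 _ (hp t).2.1 (hp t).2.2
  have hmono : Monotone p := monotone_nat_of_le_succ fun t =>
    ⟨subset_union_left, subset_union_left⟩
  refine ⟨fun t => N t (p t).1 (p t).2, fun t => K t (p t).1 (p t).2,
    fun t => ⟨(hhole t).1, (hhole t).2.1, (hhole t).2.2.1.trans sdiff_subset⟩,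
    fun t => (hpiece t).2.2.2, fun s t => ?_⟩
  rcases lt_trichotomy t s with h | rfl | h
  · exact (hpiece s).2.2.1.mono_right <|
      subset_union_of_subset_left (subset_union_right.trans (hmono h).1) _
  · exact (hpiece t).2.2.1.mono_right subset_union_right
  · exact disjoint_of_subset_left (subset_union_right.trans (hmono h).2)
      (disjoint_sdiff_right.mono_right (hhole t).2.2.1)

theorem exists_isClosed_isNowhereDense_forall_exists_subset [SecondCountableTopology X]
    [Nonempty X] (A : Set (Set X)) (hA_empty : ∅ ∈ A) (hA_union : ∀ U ∈ A, ∀ V ∈ A, U ∪ V ∈ A)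
    (hA_hole : ∀ O, IsOpen O → O.Nonempty → ∃ N ⊆ O, IsOpen N ∧ N.Nonempty ∧ N ∈ A)
    (R : ℕ → Set X → Prop)
    (hR : ∀ n, ∀ U ∈ A, ∃ K, IsClosed K ∧ IsNowhereDense K ∧ Disjoint K U ∧ R n K) :
    ∃ C, IsClosed C ∧ IsNowhereDense C ∧ ∀ n, ∃ K ⊆ C, R n K := by
  obtain ⟨b, hb, hb_sub⟩ := exists_seq_isOpen_nonempty_forall_subset X
  obtain ⟨N, K, hN, hK, hKN⟩ :=
    exists_seq_isOpen_subset_forall_disjoint hb A hA_empty hA_union hA_hole R hR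
  have hC : IsClosed (⋃ t, N t)ᶜ ∧ IsNowhereDense (⋃ t, N t)ᶜ := by
    rw [isClosed_isNowhereDense_iff_compl, compl_compl]
    refine ⟨isOpen_iUnion fun t => (hN t).1, dense_iff_inter_open.mpr fun O hO hOne => ?_⟩
    obtain ⟨t, ht⟩ := hb_sub O hO hOne
    obtain ⟨x, hx⟩ := (hN t).2.1
    exact ⟨x, ht ((hN t).2.2 hx), mem_iUnion_of_mem t hx⟩
  refine ⟨_, hC.1, hC.2, fun n => ⟨K n, ?_, hK n⟩⟩
  simp only [subset_compl_iff_disjoint_right, disjoint_iUnion_right]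
  exact hKN n

end NowhereDense

theorem disjoint_smul_set_mul_of_notMem {G : Type*} [Group G] {S V W : Set G} {z : G}
    (hWV : W * W⁻¹ ⊆ V) (hz : z ∉ S * V) : Disjoint (z • W) (S * W) := by
  refine disjoint_left.mpr ?_
  rintro _ ⟨w, hw, rfl⟩ ⟨s, hs, w', hw', h : s * w' = z * w⟩
  refine hz ⟨s, hs, w' * w⁻¹, hWV (mul_mem_mul hw' (inv_mem_inv.mpr hw)), ?_⟩
  simp only [← mul_assoc, h, mul_inv_cancel_right]

section TopologicalGroup

variable {G : Type*} [Group G] [TopologicalSpace G] [IsTopologicalGroup G]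

theorem not_countable_of_mul_eq_univ [BaireSpace G] {Q M : Set G} (hM : IsMeagre M)
    (hQM : Q * M = Set.univ) : ¬Q.Countable := by
  intro hQ
  refine not_isMeagre_of_isOpen (X := G) isOpen_univ univ_nonempty ?_
  rw [← hQM, ← iUnion_mul_left_image]
  exact isMeagre_biUnion hQ fun q _ => (Homeomorph.mulLeft q).isInducing.isMeagre_image (s := M) hM

theorem Dense.mul_eq_univ_of_mem_nhds_one {D W : Set G} (hD : Dense D) (hW : W ∈ 𝓝 1) :
    D * W = Set.univ := by
  refine eq_univ_of_univ_subset ?_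
  rw [← univ_mul ⟨1, mem_interior_iff_mem_nhds.mpr hW⟩, ← hD.closure_eq,
    isOpen_interior.closure_mul]
  exact mul_subset_mul_left interior_subset

variable [SecondCountableTopology G] {F : ℕ → Set G}

theorem exists_isClosed_isNowhereDense_forall_subset_finite_mul [T1Space G]
    (hnd : ¬DiscreteTopology G) (hfin : ∀ V ∈ 𝓝 (1 : G), ∃ S : Set G, S.Finite ∧ S * V = Set.univ)
    (hF : ∀ n, IsClosed (F n) ∧ IsNowhereDense (F n)) :
    ∃ C, IsClosed C ∧ IsNowhereDense C ∧ ∀ n, ∃ S : Set G, S.Finite ∧ F n ⊆ S * C := by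
  have hpiece : ∀ n, ∀ U : Set G, (1 : G) ∉ closure U → ∃ K, IsClosed K ∧ IsNowhereDense K ∧
      Disjoint K U ∧ ∃ S : Set G, S.Finite ∧ F n ⊆ S * K := by
    intro n U hU
    obtain ⟨V, hV1, hVc, hVU⟩ :=
      exists_mem_nhds_isClosed_subset (isClosed_closure.isOpen_compl.mem_nhds hU)
    obtain ⟨S, hS, hSV⟩ := hfin V hV1
    refine ⟨V ∩ ⋃ x ∈ S, x⁻¹ • F n, hVc.inter (hS.isClosed_biUnion fun x _ => (hF n).1.smul _),
      (hS.isNowhereDense_biUnion fun x _ => (hF n).2.smul _).mono inter_subset_right,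
      disjoint_left.mpr fun y hy hyU => hVU hy.1 (subset_closure hyU), S, hS, fun y hy => ?_⟩
    obtain ⟨x, hx, v, hv, rfl⟩ : y ∈ S * V := hSV ▸ mem_univ y
    exact ⟨x, hx, v, ⟨hv, mem_biUnion hx ⟨x * v, hy, inv_mul_cancel_left x v⟩⟩, rfl⟩
  obtain ⟨C, hCc, hCn, hC⟩ := exists_isClosed_isNowhereDense_forall_exists_subset
    {U | (1 : G) ∉ closure U} (by simp) (fun U hU V hV => by simp_all [closure_union])
    (fun O => exists_isOpen_nonempty_subset_notMem_closure
      (mt discreteTopology_iff_isOpen_singleton_one.mpr hnd)) _ hpiece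
  refine ⟨C, hCc, hCn, fun n => ?_⟩
  obtain ⟨K, hKC, S, hS, hFK⟩ := hC n
  exact ⟨S, hS, hFK.trans (mul_subset_mul_left hKC)⟩

theorem exists_isClosed_isNowhereDense_forall_subset_countable_mul_of_mul_ne_univ {V₀ : Set G}
    (hV₀ : V₀ ∈ 𝓝 1) (hV₀_fin : ∀ S : Set G, S.Finite → S * V₀ ≠ Set.univ)
    (hF : ∀ n, IsClosed (F n) ∧ IsNowhereDense (F n)) :
    ∃ C, IsClosed C ∧ IsNowhereDense C ∧ ∀ n, ∃ E : Set G, E.Countable ∧ F n ⊆ E * C := by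
  obtain ⟨W, hW1, hWc, hWinv, hWV⟩ := exists_closed_nhds_one_inv_eq_mul_subset hV₀
  obtain ⟨d, hd⟩ := TopologicalSpace.exists_dense_seq G
  let P : ℕ → Set G := fun j => F j.unpair.1 ∩ d j.unpair.2 • W
  have hA_union (U : Set G) (hU : ∃ S : Set G, S.Finite ∧ U ⊆ S * W) (V : Set G)
      (hV : ∃ T : Set G, T.Finite ∧ V ⊆ T * W) : ∃ S : Set G, S.Finite ∧ U ∪ V ⊆ S * W := by
    obtain ⟨S, hS, hUS⟩ := hU
    obtain ⟨T, hT, hVT⟩ := hV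
    exact ⟨S ∪ T, hS.union hT, (union_subset_union hUS hVT).trans union_mul.superset⟩
  have hA_hole (O : Set G) (hO : IsOpen O) (hne : O.Nonempty) :
      ∃ N ⊆ O, IsOpen N ∧ N.Nonempty ∧ ∃ S : Set G, S.Finite ∧ N ⊆ S * W := by
    obtain ⟨u, hu⟩ := hne
    refine ⟨O ∩ u • interior W, inter_subset_left, hO.inter (isOpen_interior.smul u),
      ⟨u, hu, 1, mem_interior_iff_mem_nhds.mpr hW1, mul_one u⟩, {u}, finite_singleton u, ?_⟩
    rw [singleton_mul]
    exact inter_subset_right.trans (smul_set_mono interior_subset)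
  have hpiece (j : ℕ) (U : Set G) (hU : ∃ S : Set G, S.Finite ∧ U ⊆ S * W) :
      ∃ K, IsClosed K ∧ IsNowhereDense K ∧ Disjoint K U ∧ ∃ g : G, P j ⊆ g • K := by
    obtain ⟨S, hS, hUS⟩ := hU
    obtain ⟨z, hz⟩ := (ne_univ_iff_exists_notMem _).mp (hV₀_fin S hS)
    refine ⟨(z * (d j.unpair.2)⁻¹) • P j, ((hF _).1.inter (hWc.smul _)).smul _,
      ((hF _).2.mono inter_subset_left).smul _, ?_, _, (inv_smul_smul _ _).superset⟩
    have hK : (z * (d j.unpair.2)⁻¹) • P j ⊆ z • W := by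
      grw [show P j ⊆ _ from inter_subset_right, smul_smul, inv_mul_cancel_right]
    exact disjoint_of_subset hK hUS (disjoint_smul_set_mul_of_notMem (by rwa [hWinv]) hz)
  obtain ⟨C, hCc, hCn, hC⟩ := exists_isClosed_isNowhereDense_forall_exists_subset
    {U | ∃ S : Set G, S.Finite ∧ U ⊆ S * W} ⟨∅, finite_empty, by simp⟩ hA_union hA_hole _ hpiece
  choose K hKC g hg using hC
  refine ⟨C, hCc, hCn, fun n => ⟨range fun k => g (Nat.pair n k), countable_range _, ?_⟩⟩
  intro y hy
  obtain ⟨_, ⟨k, rfl⟩, w, hw, rfl⟩ : y ∈ range d * W :=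
    hd.mul_eq_univ_of_mem_nhds_one hW1 ▸ mem_univ y
  have hP : d k * w ∈ P (Nat.pair n k) := by
    simpa [P] using ⟨hy, w, hw, rfl⟩
  obtain ⟨c, hc, hcy⟩ := hg _ hP
  exact ⟨_, mem_range_self k, c, hKC _ hc, hcy⟩

theorem exists_isClosed_isNowhereDense_forall_subset_countable_mul [T1Space G]
    (hnd : ¬DiscreteTopology G) (hF : ∀ n, IsClosed (F n) ∧ IsNowhereDense (F n)) :
    ∃ C, IsClosed C ∧ IsNowhereDense C ∧ ∀ n, ∃ E : Set G, E.Countable ∧ F n ⊆ E * C := by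
  by_cases hfin : ∀ V ∈ 𝓝 (1 : G), ∃ S : Set G, S.Finite ∧ S * V = Set.univ
  · obtain ⟨C, hCc, hCn, hC⟩ := exists_isClosed_isNowhereDense_forall_subset_finite_mul hnd hfin hF
    exact ⟨C, hCc, hCn, fun n => (hC n).imp fun _ hS => ⟨hS.1.countable, hS.2⟩⟩
  · push Not at hfin
    obtain ⟨V₀, hV₀, hV₀_fin⟩ := hfin
    exact exists_isClosed_isNowhereDense_forall_subset_countable_mul_of_mul_ne_univ hV₀ hV₀_fin hF

theorem IsMeagre.exists_countable_isClosed_isNowhereDense_subset_mul [T1Space G]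
    (hnd : ¬DiscreteTopology G) {M : Set G} (hM : IsMeagre M) :
    ∃ E C : Set G, E.Countable ∧ IsClosed C ∧ IsNowhereDense C ∧ M ⊆ E * C := by
  obtain ⟨F, hF, hMF⟩ := hM.exists_seq_isClosed_isNowhereDense
  obtain ⟨C, hCc, hCn, hC⟩ := exists_isClosed_isNowhereDense_forall_subset_countable_mul hnd hF
  choose E hEc hFE using hC
  exact ⟨⋃ n, E n, C, countable_iUnion hEc, hCc, hCn,
    hMF.trans (iUnion_subset fun n => (hFE n).trans (mul_subset_mul_right (subset_iUnion E n)))⟩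

end TopologicalGroup

/-- for every non-discrete Polish group `G`, `cov_G = cov*_G`. -/
theorem covGroup_eq_covGroupStar
    {G : Type*} [Group G] [TopologicalSpace G] [IsTopologicalGroup G] [PolishSpace G]
    (hnd : ¬ DiscreteTopology G) :
    covGroup G = covGroupStar G := by
  refine csInf_eq_csInf_of_forall_exists_le ?_ ?_
  · rintro _ ⟨Q, C, rfl, -, hC, hQC⟩
    exact ⟨_, ⟨Q, C, rfl, hC.isMeagre, hQC⟩, le_rfl⟩
  · rintro _ ⟨Q, M, rfl, hM, hQM⟩
    obtain ⟨E, C, hE, hCc, hCn, hMEC⟩ :=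
      hM.exists_countable_isClosed_isNowhereDense_subset_mul hnd
    have hQ : ℵ₀ ≤ #Q :=
      le_of_not_ge (mt le_aleph0_iff_set_countable.mp (not_countable_of_mul_eq_univ hM hQM))
    refine ⟨_, ⟨Q * E, C, rfl, hCc, hCn, ?_⟩, ?_⟩
    · rw [mul_assoc]
      exact eq_univ_of_univ_subset (hQM ▸ mul_subset_mul_left hMEC)
    · calc #(Q * E : Set G) ≤ #Q * #E := mk_mul_le
        _ ≤ #Q * ℵ₀ := by gcongr; exact le_aleph0_iff_set_countable.mpr hE
        _ = #Q := mul_aleph0_eq hQ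
end
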